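/- arXiv:2508.05910 — 3 statements merged into one kernel-verified Lean document; each statement's English description precedes it below -/
import Mathlib

section
/- Let A ∈ M_{m,n}(ℤ), B ∈ M_{l,m}(ℤ), and b ∈ ℝ. If μ(A) ≥ l·‖B‖_∞·b and μ(B) ≥ b, then μ(B·A) ≥ b. -/
open MeasureTheory

noncomputable instance : MeasurableSpace Circle := borel Circle
instance : BorelSpace Circle := ⟨rfl⟩

/-- The unit torus `𝕋^n`, as the group of `n`-tuples of elements of the unit circle in `ℂ`,
under coordinatewise multiplication. -/
abbrev Torus (n : ℕ) := Fin n → Circle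

/-- The continuous homomorphism `q_A : 𝕋^m → 𝕋^n` associated to an integer matrix `A`,
given by monomial substitution: the `i`-th coordinate of the image is `∏_j z_j ^ (A i j)`. -/
noncomputable def qHom {n m : ℕ} (A : Matrix (Fin n) (Fin m) ℤ) (z : Torus m) : Torus n :=
  fun i => ∏ j, (z j) ^ (A i j)

/-- The sup-norm `‖v‖_∞` of an integer vector, as a natural number. -/
def supNorm {n : ℕ} (v : Fin n → ℤ) : ℕ := Finset.univ.sup fun i => (v i).natAbs

/-- The sup-norm `‖B‖_∞` of an integer matrix: the maximal absolute value of its entries. -/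
def matNorm {n m : ℕ} (B : Matrix (Fin n) (Fin m) ℤ) : ℕ :=
  Finset.univ.sup fun i => supNorm (B i)

/-- The Boyd height `μ(A)` of an integer matrix `A ∈ M_{n,m}(ℤ)`:
the minimum of `‖v‖_∞` over nonzero integer vectors `v` with `vᵀA = 0`,
valued in `ℝ≥0∞` (so it is `∞` when no such `v` exists). -/
noncomputable def boydHeight {n m : ℕ} (A : Matrix (Fin n) (Fin m) ℤ) : ENNReal :=
  sInf {x : ENNReal | ∃ v : Fin n → ℤ, v ≠ 0 ∧ Matrix.vecMul v A = 0 ∧ x = (supNorm v : ENNReal)}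

/-- The Boyd height `μ(r)` of an integer vector `r ∈ ℤ^n`, viewing `r` as an `n × 1` matrix. -/
noncomputable def boydHeightVec {n : ℕ} (r : Fin n → ℤ) : ENNReal :=
  boydHeight (Matrix.of fun i (_ : Fin 1) => r i)

/-- The homomorphism `q_r : 𝕋 → 𝕋^n` (here `𝕋 = 𝕋^1`) given by `z ↦ (z^{r₁}, …, z^{r_n})`. -/
noncomputable def qVec {n : ℕ} (r : Fin n → ℤ) : Torus 1 → Torus n :=
  qHom (Matrix.of fun i (_ : Fin 1) => r i)

/-- The normalized Haar (probability) measure `τ_n` on the torus `𝕋^n`. -/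
noncomputable def τ (n : ℕ) : Measure (Torus n) :=
  Measure.haarMeasure (⊤ : TopologicalSpace.PositiveCompacts (Torus n))

lemma supNorm_eq_zero_iff {n : ℕ} (v : Fin n → ℤ) : supNorm v = 0 ↔ v = 0 := by
  constructor
  · intro h
    funext i
    have h1 : (v i).natAbs ≤ supNorm v :=
      Finset.le_sup (f := fun i => (v i).natAbs) (Finset.mem_univ i)
    rw [h] at h1
    exact Int.natAbs_eq_zero.mp (Nat.le_zero.mp h1)
  · rintro rfl
    simp [supNorm]

lemma supNorm_vecMul_le {l m : ℕ} (v : Fin l → ℤ) (B : Matrix (Fin l) (Fin m) ℤ) :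
    supNorm (Matrix.vecMul v B) ≤ l * matNorm B * supNorm v := by
  apply Finset.sup_le
  intro j _
  have h1 : (Matrix.vecMul v B j).natAbs ≤ ∑ i : Fin l, (v i * B i j).natAbs := by
    simpa [Matrix.vecMul, dotProduct] using
      nat_abs_sum_le Finset.univ (fun i => v i * B i j)
  refine h1.trans ?_
  have h2 : ∀ i : Fin l, (v i * B i j).natAbs ≤ matNorm B * supNorm v := by
    intro i
    rw [Int.natAbs_mul]
    have hv : (v i).natAbs ≤ supNorm v := Finset.le_sup (f := fun i => (v i).natAbs) (Finset.mem_univ i)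
    have hB : (B i j).natAbs ≤ matNorm B :=
      (Finset.le_sup (f := fun j => (B i j).natAbs) (Finset.mem_univ j)).trans
        (Finset.le_sup (f := fun i => supNorm (B i)) (Finset.mem_univ i))
    calc (v i).natAbs * (B i j).natAbs ≤ supNorm v * matNorm B :=
          Nat.mul_le_mul hv hB
      _ = matNorm B * supNorm v := Nat.mul_comm _ _
  calc ∑ i : Fin l, (v i * B i j).natAbs ≤ ∑ _i : Fin l, matNorm B * supNorm v :=
        Finset.sum_le_sum fun i _ => h2 i
    _ = l * (matNorm B * supNorm v) := by simp [Finset.sum_const]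
    _ = l * matNorm B * supNorm v := by ring

/-- If `μ(A) ≥ l·‖B‖_∞·b` and `μ(B) ≥ b`, then `μ(B·A) ≥ b`. -/
theorem stmt6 {l m n : ℕ} (A : Matrix (Fin m) (Fin n) ℤ) (B : Matrix (Fin l) (Fin m) ℤ) (b : ℝ)
    (hA : ENNReal.ofReal ((l : ℝ) * (matNorm B : ℝ) * b) ≤ boydHeight A)
    (hB : ENNReal.ofReal b ≤ boydHeight B) :
    ENNReal.ofReal b ≤ boydHeight (B * A) := by
  apply le_sInf
  rintro x ⟨v, hv, h0, rfl⟩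
  set w := Matrix.vecMul v B with hwdef
  by_cases hw : w = 0
  · exact hB.trans (sInf_le ⟨v, hv, hw, rfl⟩)
  · have hwA : Matrix.vecMul w A = 0 := by
      rw [hwdef, Matrix.vecMul_vecMul]; exact h0
    have hA' : ENNReal.ofReal ((l : ℝ) * (matNorm B : ℝ) * b) ≤ (supNorm w : ENNReal) :=
      hA.trans (sInf_le ⟨w, hw, hwA, rfl⟩)
    have hA'' : (l : ℝ) * (matNorm B : ℝ) * b ≤ (supNorm w : ℝ) := by
      rw [show ((supNorm w : ℕ) : ENNReal) = ENNReal.ofReal (supNorm w : ℝ) by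
        simp [ENNReal.ofReal_natCast]] at hA'
      exact (ENNReal.ofReal_le_ofReal_iff (by positivity)).mp hA'
    have hbound : (supNorm w : ℝ) ≤ (l : ℝ) * (matNorm B : ℝ) * (supNorm v : ℝ) := by
      have := supNorm_vecMul_le v B
      exact_mod_cast this
    have hKpos : (0 : ℝ) < (l : ℝ) * (matNorm B : ℝ) := by
      rcases Nat.eq_zero_or_pos (l * matNorm B) with hK | hK
      · exfalso
        have : supNorm w = 0 := by
          have hle := supNorm_vecMul_le v B
          rw [← hwdef, hK, Nat.zero_mul] at hle
          omega
        exact hw ((supNorm_eq_zero_iff w).mp this)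
      · have : (0 : ℝ) < ((l * matNorm B : ℕ) : ℝ) := by exact_mod_cast hK
        simpa [Nat.cast_mul] using this
    have hb : b ≤ (supNorm v : ℝ) := by
      have h := hA''.trans hbound
      exact le_of_mul_le_mul_left (by linarith) hKpos
    rw [show ((supNorm v : ℕ) : ENNReal) = ENNReal.ofReal (supNorm v : ℝ) by
      simp [ENNReal.ofReal_natCast]]
    exact ENNReal.ofReal_le_ofReal hb
end

section
/- Let P ∈ ℂ[Z₁^{±1},…,Z_n^{±1}] be a nonzero Laurent polynomial. There exists a bound M such that for every integer matrix A with n rows and Boyd height μ(A) ≥ M, the substituted Laurent polynomial P^{(A)}(Z₁,…,Z_m) = P(∏_j Z_j^{a_{1j}}, …, ∏_j Z_j^{a_{nj}}) is not the zero Laurent polynomial. -/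
open MeasureTheory

/-- Multivariate Laurent polynomials in `n` variables over `ℂ`,
realized as the monoid algebra of the group `ℤ^n` of exponent vectors. -/
abbrev MvLaurent (n : ℕ) := AddMonoidAlgebra ℂ (Fin n →₀ ℤ)

/-- Evaluation of a Laurent polynomial at a point of `ℂ^n` (with nonzero coordinates,
e.g. on the torus): `P(z) = ∑_d P_d ∏_i z_i ^ d_i`. -/
noncomputable def laurentEval {n : ℕ} (P : MvLaurent n) (z : Fin n → ℂ) : ℂ :=
  ∑ d ∈ P.coeff.support, P.coeff d * ∏ i, (z i) ^ (d i)

/-- The power substitution `P^{(A)}`: the Laurent polynomial obtained from `P` by substituting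
`Z_i ↦ ∏_j Z_j^{a_{ij}}`; the exponent vector `d` is sent to `d·A`. -/
noncomputable def laurentSubst {n m : ℕ} (A : Matrix (Fin n) (Fin m) ℤ) (P : MvLaurent n) :
    MvLaurent m :=
  AddMonoidAlgebra.ofCoeff (Finsupp.mapDomain (fun d : Fin n →₀ ℤ =>
    Finsupp.equivFunOnFinite.symm fun j => ∑ i, d i * A i j) P.coeff)

/-! If `μ(A) > 2N`, where `N` bounds the exponents of `P`, then `d ↦ d·A` is injective on the
support of `P`: two exponents with the same image differ by a nonzero `v` with `vᵀA = 0` and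
`‖v‖_∞ ≤ 2N`. So no cancellation occurs in `P^{(A)}`, whose coefficients are those of `P`. -/

open Matrix

lemma supNorm_sub_le {n : ℕ} (v w : Fin n → ℤ) : supNorm (v - w) ≤ supNorm v + supNorm w :=
  Finset.sup_le fun i _ => calc
    (v i - w i).natAbs ≤ (v i).natAbs + (w i).natAbs := Int.natAbs_sub_le _ _
    _ ≤ supNorm v + supNorm w :=
      add_le_add (Finset.le_sup (f := fun i => (v i).natAbs) (Finset.mem_univ i))
        (Finset.le_sup (f := fun i => (w i).natAbs) (Finset.mem_univ i))

lemma boydHeight_le_supNorm {n m : ℕ} {A : Matrix (Fin n) (Fin m) ℤ} {v : Fin n → ℤ}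
    (hv : v ≠ 0) (hvA : vecMul v A = 0) : boydHeight A ≤ supNorm v :=
  sInf_le ⟨v, hv, hvA, rfl⟩

lemma injOn_vecMul_of_boydHeight {n m N : ℕ} {A : Matrix (Fin n) (Fin m) ℤ}
    (hA : ((2 * N + 1 : ℕ) : ENNReal) ≤ boydHeight A) :
    Set.InjOn (fun v => vecMul v A) {v | supNorm v ≤ N} := by
  intro v hv w hw hvw
  by_contra hne
  have hker : vecMul (v - w) A = 0 := by
    rw [sub_vecMul]
    exact sub_eq_zero.mpr hvw
  have hsmall : supNorm (v - w) ≤ 2 * N := by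
    have : supNorm v ≤ N ∧ supNorm w ≤ N := ⟨hv, hw⟩
    have := supNorm_sub_le v w
    omega
  have hlarge : 2 * N + 1 ≤ supNorm (v - w) := by
    exact_mod_cast hA.trans (boydHeight_le_supNorm (sub_ne_zero.mpr hne) hker)
  omega

lemma laurentSubst_ne_zero_of_injOn {n m : ℕ} {A : Matrix (Fin n) (Fin m) ℤ} {P : MvLaurent n}
    (hP : P ≠ 0) (hinj : Set.InjOn (fun d : Fin n →₀ ℤ => vecMul ⇑d A) P.coeff.support) :
    laurentSubst A P ≠ 0 := by
  have hinj' : Set.InjOn (fun d : Fin n →₀ ℤ =>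
      Finsupp.equivFunOnFinite.symm fun j => ∑ i, d i * A i j) P.coeff.support :=
    fun d hd d' hd' hdd' => hinj hd hd' (congrArg DFunLike.coe hdd')
  intro hzero
  exact hP (AddMonoidAlgebra.coeff_eq_zero.mp (Finsupp.mapDomain_injOn _ hinj' (by simp) (by simp)
    (by simpa [laurentSubst] using hzero)))

/-- For a nonzero Laurent polynomial `P` in `n` variables, there is a bound `M` such that
`P^{(A)} ≠ 0` for every integer matrix `A` with `n` rows and Boyd height `μ(A) ≥ M`. -/
theorem stmt13 {n : ℕ} (P : MvLaurent n) (hP : P ≠ 0) :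
    ∃ M : ℕ, ∀ (m : ℕ) (A : Matrix (Fin n) (Fin m) ℤ),
      (M : ENNReal) ≤ boydHeight A → laurentSubst A P ≠ 0 := by
  set N := P.coeff.support.sup fun d => supNorm (d : Fin n → ℤ)
  have hbound : ∀ d ∈ P.coeff.support, supNorm (d : Fin n → ℤ) ≤ N :=
    fun d hd => Finset.le_sup (f := fun d : Fin n →₀ ℤ => supNorm (d : Fin n → ℤ)) hd
  refine ⟨2 * N + 1, fun m A hA => laurentSubst_ne_zero_of_injOn hP ?_⟩
  exact fun d hd d' hd' hdd' =>
    DFunLike.coe_injective (injOn_vecMul_of_boydHeight hA (hbound d hd) (hbound d' hd') hdd')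
end

section
/- Suppose 𝒞 = ⋃_{n≥1} 𝒞(𝕋^n) is a Boyd–Lawton collection of functions and g ∈ 𝒞(𝕋^n) with n ≥ 2. Then for every ε > 0 there is a bound M such that for every positive integer m and every continuous homomorphism q_A : 𝕋^m → 𝕋^n with Boyd height μ(q_A) ≥ M, the function g ∘ q_A is integrable and |∫_{𝕋^n} g dτ_n − ∫_{𝕋^m} g ∘ q_A dτ_m| < ε. -/
open MeasureTheory

/-- A Boyd–Lawton collection `𝒞 = ⋃_n 𝒞(𝕋^n)`: a family of complex-valued functions on the
tori such that (1) each member is integrable; (2) each member on `𝕋^n`, `n ≥ 2`, satisfies the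
single-variable Boyd–Lawton limit over homomorphisms `q_r : 𝕋 → 𝕋^n`, `r ∈ ℤ^n`; and (3) the
family is closed under composition with homomorphisms `q_A` of sufficiently large Boyd height. -/
structure BLCollection where
  mem : ∀ n : ℕ, (Torus n → ℂ) → Prop
  integrable : ∀ (n : ℕ) (g : Torus n → ℂ), mem n g → MeasureTheory.Integrable g (τ n)
  singleBL : ∀ (n : ℕ) (g : Torus n → ℂ), 2 ≤ n → mem n g → ∀ ε : ℝ, 0 < ε → ∃ M : ℕ,
      ∀ r : Fin n → ℤ, (M : ENNReal) ≤ boydHeightVec r →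
        MeasureTheory.Integrable (g ∘ qVec r) (τ 1) ∧
        ‖(∫ z, g z ∂ τ n) - ∫ w, g (qVec r w) ∂ τ 1‖ < ε
  closed : ∀ (n : ℕ) (g : Torus n → ℂ), mem n g → ∃ B : ℕ,
      ∀ (m : ℕ) (A : Matrix (Fin n) (Fin m) ℤ),
        (B : ENNReal) ≤ boydHeight A → mem m (g ∘ qHom A)


/-! ### Auxiliary lemmas -/

section Aux

lemma zpow_finset_sum {G : Type*} [CommGroup G] (x : G) {ι : Type*} (s : Finset ι)
    (c : ι → ℤ) : x ^ (∑ i ∈ s, c i) = ∏ i ∈ s, x ^ c i := by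
  classical
  induction s using Finset.cons_induction with
  | empty => simp
  | cons a s ha ih => rw [Finset.sum_cons, Finset.prod_cons, zpow_add, ih]

lemma boydHeight_le {n m : ℕ} (A : Matrix (Fin n) (Fin m) ℤ) {v : Fin n → ℤ}
    (hv : v ≠ 0) (h : Matrix.vecMul v A = 0) : boydHeight A ≤ (supNorm v : ENNReal) :=
  sInf_le ⟨v, hv, h, rfl⟩

lemma le_boydHeight {n m : ℕ} (A : Matrix (Fin n) (Fin m) ℤ) {M : ℕ}
    (h : ∀ v : Fin n → ℤ, v ≠ 0 → Matrix.vecMul v A = 0 → M ≤ supNorm v) :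
    (M : ENNReal) ≤ boydHeight A := by
  refine le_sInf ?_
  rintro x ⟨v, hv, hvA, rfl⟩
  exact_mod_cast h v hv hvA

lemma vecMul_colMat_eq_zero_iff {n : ℕ} (v r : Fin n → ℤ) :
    Matrix.vecMul v (Matrix.of fun i (_ : Fin 1) => r i) = 0 ↔ ∑ i, v i * r i = 0 := by
  constructor
  · intro h
    have := congrFun h 0
    simpa [Matrix.vecMul, dotProduct] using this
  · intro h
    funext j
    simpa [Matrix.vecMul, dotProduct] using h

lemma le_boydHeightVec {n : ℕ} (r : Fin n → ℤ) {M : ℕ}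
    (h : ∀ v : Fin n → ℤ, v ≠ 0 → (∑ i, v i * r i) = 0 → M ≤ supNorm v) :
    (M : ENNReal) ≤ boydHeightVec r := by
  refine le_boydHeight _ (fun v hv hvA => h v hv ?_)
  exact (vecMul_colMat_eq_zero_iff v r).1 hvA

lemma qHom_comp_qVec {n m : ℕ} (A : Matrix (Fin n) (Fin m) ℤ) (s : Fin m → ℤ)
    (w : Torus 1) : qHom A (qVec s w) = qVec (A.mulVec s) w := by
  funext i
  have hq : ∀ (k : ℕ) (r : Fin k → ℤ) (j : Fin k), qVec r w j = (w 0) ^ (r j) := by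
    intro k r j
    simp [qVec, qHom, Fin.prod_univ_one]
  show (∏ j, (qVec s w j) ^ (A i j)) = qVec (A.mulVec s) w i
  have h1 : ∀ j, (qVec s w j) ^ (A i j) = (w 0) ^ (A i j * s j) := by
    intro j
    rw [hq m s j, ← zpow_mul, mul_comm]
  have h2 : qVec (A.mulVec s) w i = (w 0) ^ (∑ j, A i j * s j) := by
    rw [hq n (A.mulVec s) i]
    simp [Matrix.mulVec, dotProduct]
  rw [h2, zpow_finset_sum]
  exact Finset.prod_congr rfl fun j _ => (h1 j)

/-- For any finite set of nonzero integer vectors, there is an integer vector not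
orthogonal to any of them (take `s j = t ^ j` for suitable `t`). -/
lemma exists_not_orthogonal {m : ℕ} (F : Set (Fin m → ℤ)) (hF : F.Finite)
    (h0 : ∀ u ∈ F, u ≠ 0) :
    ∃ s : Fin m → ℤ, ∀ u ∈ F, (∑ i, u i * s i) ≠ 0 := by
  classical
  set P : (Fin m → ℤ) → Polynomial ℤ :=
    fun u => ∑ i, Polynomial.C (u i) * Polynomial.X ^ (i : ℕ) with hP
  have hPne : ∀ u ∈ F, P u ≠ 0 := by
    intro u hu hzero
    apply h0 u hu
    funext i
    have hcoeff : (P u).coeff (i : ℕ) = u i := by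
      rw [hP]
      simp only [Polynomial.finset_sum_coeff, Polynomial.coeff_C_mul, Polynomial.coeff_X_pow]
      rw [Finset.sum_eq_single i]
      · simp
      · intro b _ hb
        have hne : (i : ℕ) ≠ (b : ℕ) := fun h => hb (Fin.ext h.symm)
        simp [hne]
      · simp
    rw [hzero] at hcoeff
    simpa using hcoeff.symm
  have hfin : (⋃ u ∈ F, {t : ℤ | (P u).IsRoot t}).Finite :=
    hF.biUnion fun u hu => Polynomial.finite_setOf_isRoot (hPne u hu)
  have : ((⋃ u ∈ F, {t : ℤ | (P u).IsRoot t})ᶜ).Nonempty := by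
    have := hfin.infinite_compl
    exact this.nonempty
  obtain ⟨t, ht⟩ := this
  refine ⟨fun i => t ^ (i : ℕ), fun u hu hsum => ?_⟩
  apply ht
  refine Set.mem_biUnion hu ?_
  show (P u).IsRoot t
  rw [Polynomial.IsRoot, hP]
  simpa [Polynomial.eval_finset_sum] using hsum

lemma finite_small_vectors (m K : ℕ) : {u : Fin m → ℤ | supNorm u < K}.Finite := by
  have hbox : {u : Fin m → ℤ | supNorm u < K}
      ⊆ Set.pi Set.univ (fun _ : Fin m => Set.Icc (-(K : ℤ)) (K : ℤ)) := by
    intro u hu i _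
    have h1 : (u i).natAbs ≤ supNorm u :=
      Finset.le_sup (f := fun j => (u j).natAbs) (Finset.mem_univ i)
    have h2 : (u i).natAbs ≤ K := le_trans h1 (le_of_lt hu)
    have h3 : |u i| ≤ (K : ℤ) := by
      rw [Int.abs_eq_natAbs]
      exact_mod_cast h2
    exact Set.mem_Icc.2 (abs_le.1 h3)
  exact Set.Finite.subset (Set.Finite.pi fun _ => Set.finite_Icc _ _) hbox

end Aux

/-- Main theorem: for `g` in a Boyd–Lawton collection on `𝕋^n`, `n ≥ 2`, and any `ε > 0`,
there is a bound `M` such that for every positive `m` and every `q_A : 𝕋^m → 𝕋^n` with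
`μ(q_A) ≥ M`, `g ∘ q_A` is integrable and `|∫ g dτ_n − ∫ g ∘ q_A dτ_m| < ε`. -/
theorem stmt14 (C : BLCollection) {n : ℕ} (hn : 2 ≤ n) (g : Torus n → ℂ) (hg : C.mem n g)
    (ε : ℝ) (hε : 0 < ε) :
    ∃ M : ℕ, ∀ (m : ℕ), 0 < m → ∀ A : Matrix (Fin n) (Fin m) ℤ,
      (M : ENNReal) ≤ boydHeight A →
      Integrable (g ∘ qHom A) (τ m) ∧
      ‖(∫ z, g z ∂ τ n) - ∫ w, g (qHom A w) ∂ τ m‖ < ε := by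
  classical
  obtain ⟨B, hB⟩ := C.closed n g hg
  obtain ⟨M₁, hM₁⟩ := C.singleBL n g hn hg (ε / 2) (by linarith)
  refine ⟨max B M₁, fun m hm A hA => ?_⟩
  have hBA : (B : ENNReal) ≤ boydHeight A :=
    le_trans (Nat.cast_le.2 (le_max_left B M₁)) hA
  have hM₁A : (M₁ : ENNReal) ≤ boydHeight A :=
    le_trans (Nat.cast_le.2 (le_max_right B M₁)) hA
  have hmem : C.mem m (g ∘ qHom A) := hB m A hBA
  have hint : Integrable (g ∘ qHom A) (τ m) := C.integrable m _ hmem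
  refine ⟨hint, ?_⟩
  have hAnz : ∀ v : Fin n → ℤ, v ≠ 0 → supNorm v < M₁ → Matrix.vecMul v A ≠ 0 := by
    intro v hv hlt hvA
    have h1 : (M₁ : ENNReal) ≤ (supNorm v : ENNReal) :=
      le_trans hM₁A (boydHeight_le A hv hvA)
    have h2 : M₁ ≤ supNorm v := Nat.cast_le.1 h1
    omega
  rcases Nat.lt_or_ge m 2 with hm2 | hm2
  · -- the case `m = 1`
    have hm1 : m = 1 := by omega
    subst hm1
    set r : Fin n → ℤ := fun i => A i 0 with hr
    have hAeq : A = Matrix.of (fun i (_ : Fin 1) => r i) := by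
      funext i j
      have hj : j = 0 := Subsingleton.elim _ _
      rw [hj]; rfl
    have hbv : (M₁ : ENNReal) ≤ boydHeightVec r := by
      rw [boydHeightVec, ← hAeq]; exact hM₁A
    have hres := (hM₁ r hbv).2
    have hqe : qHom A = qVec r := by rw [qVec, ← hAeq]
    rw [hqe]
    linarith [hres]
  · -- the case `m ≥ 2`
    obtain ⟨M₂, hM₂⟩ := C.singleBL m (g ∘ qHom A) hm2 hmem (ε / 2) (by linarith)
    set F₁ : Set (Fin m → ℤ) := {u | u ≠ 0 ∧ supNorm u < M₂} with hF₁def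
    set F₂ : Set (Fin m → ℤ) :=
      (fun v => Matrix.vecMul v A) '' {v | v ≠ 0 ∧ supNorm v < M₁} with hF₂def
    have hF₁ : F₁.Finite := (finite_small_vectors m M₂).subset fun u hu => hu.2
    have hF₂ : F₂.Finite :=
      (((finite_small_vectors n M₁).subset fun v hv => hv.2).image _)
    have h0 : ∀ u ∈ F₁ ∪ F₂, u ≠ 0 := by
      rintro u (hu | ⟨v, ⟨hv, hvlt⟩, rfl⟩)
      · exact hu.1
      · exact hAnz v hv hvlt
    obtain ⟨s, hs⟩ := exists_not_orthogonal (F₁ ∪ F₂) (hF₁.union hF₂) h0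
    have hsBH : (M₂ : ENNReal) ≤ boydHeightVec s := by
      refine le_boydHeightVec s fun u hu hsum => ?_
      by_contra hlt
      exact hs u (Or.inl ⟨hu, by omega⟩) hsum
    have hAsBH : (M₁ : ENNReal) ≤ boydHeightVec (A.mulVec s) := by
      refine le_boydHeightVec _ fun u hu hsum => ?_
      by_contra hlt
      have hkey : ∑ j, (Matrix.vecMul u A) j * s j = 0 := by
        have hd := Matrix.dotProduct_mulVec u A s
        simp only [dotProduct] at hd
        rw [← hd]
        exact hsum
      exact hs _ (Or.inr ⟨u, ⟨hu, by omega⟩, rfl⟩) hkey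
    have h1 := (hM₁ (A.mulVec s) hAsBH).2
    have h2 := (hM₂ s hsBH).2
    have hcomp : (fun w => (g ∘ qHom A) (qVec s w)) =
        fun w => g (qVec (A.mulVec s) w) := by
      funext w
      simp only [Function.comp]
      rw [qHom_comp_qVec]
    rw [hcomp] at h2
    simp only [Function.comp] at h2
    have htri := dist_triangle (∫ z, g z ∂ τ n)
      (∫ w, g (qVec (A.mulVec s) w) ∂ τ 1) (∫ w, g (qHom A w) ∂ τ m)
    simp only [dist_eq_norm] at htri
    have hrev : ‖(∫ w, g (qVec (A.mulVec s) w) ∂ τ 1) - ∫ w, g (qHom A w) ∂ τ m‖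
        = ‖(∫ w, g (qHom A w) ∂ τ m) - ∫ w, g (qVec (A.mulVec s) w) ∂ τ 1‖ :=
      norm_sub_rev _ _
    rw [hrev] at htri
    linarith
end
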